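/- Let W ∈ ℝ^{n×n} be entrywise nonnegative with spectral norm ‖W‖ ≤ 1, and let ℓ > 0 be an integer. Let L_W = I_n − W and L_C = I_{ℓn} − C_ℓ ⊗ W. Suppose B_C ∈ ℝ^{ℓn×ℓn} satisfies (I_{ℓn} − B_C L_C)^⊤ U_{L_C} (I_{ℓn} − B_C L_C) ⪯ δ²·U_{L_C}. Then B_W = (1/ℓ)·(1_ℓ ⊗ I_n)^⊤ B_C (1_ℓ ⊗ I_n) satisfies (I_n − B_W L_W)^⊤ U_{L_W} (I_n − B_W L_W) ⪯ δ²·U_{L_W}. -/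

import Mathlib

/-!
Put `P = 1_ℓ ⊗ I_n`. Then `PᵀP = ℓ I`, and `C_ℓ ⊗ W` commutes with `P` in the sense
`(C_ℓ ⊗ W) P = P W`, `(C_ℓ ⊗ W)ᵀ P = P Wᵀ`; hence `U_{L_C} P = P U_{L_W}` and
`I - B_W L_W = ℓ⁻¹ Pᵀ E P` with `E = I - B_C L_C`. The projection `Q = ℓ⁻¹ P Pᵀ` onto the
range of `P` commutes with `U_{L_C}`, and this gives
`δ² U_{L_W} - (I - B_W L_W)ᵀ U_{L_W} (I - B_W L_W)
  = ℓ⁻¹ Pᵀ (δ² U_{L_C} - Eᵀ U_{L_C} E) P + ℓ⁻¹ Yᵀ U_{L_C} Y`, with `Y = (I - Q) E P`.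
The first term is PSD by hypothesis, the second because `U_{L_C} ⪰ 0`, which holds since
`C_ℓ ⊗ W` is a contraction whenever `W` is.
-/

open Matrix Kronecker

noncomputable section

/-- The symmetrization `U_A = (A + Aᵀ)/2` of a real square matrix. -/
def rsym {m : Type*} [Fintype m] (A : Matrix m m ℝ) : Matrix m m ℝ :=
  (1 / 2 : ℝ) • (A + Aᵀ)

/-- Transition matrix of the directed `l`-cycle: `(C_l)_{ij} = 1` iff `i ≡ j+1 (mod l)`. -/
def cycleR (l : ℕ) : Matrix (Fin l) (Fin l) ℝ :=
  Matrix.of fun i j => if (i : ℕ) = ((j : ℕ) + 1) % l then 1 else 0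

/-- The `ln × n` matrix `1_l ⊗ I_n` (all-ones vector tensored with the identity). -/
def onesLift (l n : ℕ) : Matrix (Fin l × Fin n) (Fin n) ℝ :=
  Matrix.of fun p j => if p.2 = j then 1 else 0

section Rsym

variable {m : Type*} [Fintype m]

lemma rsym_transpose (A : Matrix m m ℝ) : (rsym A)ᵀ = rsym A := by
  simp [rsym, add_comm]

lemma rsym_isHermitian (A : Matrix m m ℝ) : (rsym A).IsHermitian := by
  rw [IsHermitian, conjTranspose_eq_transpose_of_trivial, rsym_transpose]

lemma dotProduct_rsym_mulVec (A : Matrix m m ℝ) (v : m → ℝ) :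
    v ⬝ᵥ rsym A *ᵥ v = v ⬝ᵥ A *ᵥ v := by
  have htr : v ⬝ᵥ Aᵀ *ᵥ v = v ⬝ᵥ A *ᵥ v := by
    rw [dotProduct_mulVec, vecMul_transpose, dotProduct_comm]
  simp only [rsym, add_mulVec, smul_mulVec, dotProduct_add, dotProduct_smul, htr, smul_eq_mul]
  ring

lemma posSemidef_rsym_one_sub_of_contraction [DecidableEq m] {K : Matrix m m ℝ}
    (hK : ∀ v, K *ᵥ v ⬝ᵥ K *ᵥ v ≤ v ⬝ᵥ v) : (rsym (1 - K)).PosSemidef := by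
  refine .of_dotProduct_mulVec_nonneg (rsym_isHermitian _) fun v => ?_
  rw [star_trivial, dotProduct_rsym_mulVec, sub_mulVec, one_mulVec, dotProduct_sub]
  have hexpand : (v - K *ᵥ v) ⬝ᵥ (v - K *ᵥ v) =
      v ⬝ᵥ v - 2 * v ⬝ᵥ K *ᵥ v + K *ᵥ v ⬝ᵥ K *ᵥ v := by
    rw [sub_dotProduct, dotProduct_sub, dotProduct_sub, dotProduct_comm (K *ᵥ v) v]
    ring
  have hsq : 0 ≤ (v - K *ᵥ v) ⬝ᵥ (v - K *ᵥ v) := by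
    simpa using dotProduct_star_self_nonneg (v - K *ᵥ v)
  -- `v ⬝ v - v ⬝ Kv = ½ |v - Kv|² + ½ (|v|² - |Kv|²)`
  linarith [hK v]

lemma rsym_mul_eq_mul_rsym {k : Type*} [Fintype k] (P : Matrix m k ℝ)
    {A : Matrix m m ℝ} {B : Matrix k k ℝ} (h : A * P = P * B) (ht : Aᵀ * P = P * Bᵀ) :
    rsym A * P = P * rsym B := by
  rw [rsym, rsym, Matrix.smul_mul, Matrix.mul_smul, Matrix.add_mul, Matrix.mul_add, h, ht]

end Rsym

section Compression

variable {m k : Type*} [Fintype m] [Fintype k] [DecidableEq k]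
  {r : ℝ} {P : Matrix m k ℝ} {UC : Matrix m m ℝ} {U : Matrix k k ℝ}

lemma transpose_mul_eq_mul_transpose_of_mul_eq_mul (hr : r ≠ 0) (hPP : Pᵀ * P = r • 1)
    (hUC : UC.IsSymm) (hUCP : UC * P = P * U) : Pᵀ * UC = U * Pᵀ := by
  have hcompress : r • U = Pᵀ * UC * P := by
    rw [Matrix.mul_assoc, hUCP, ← Matrix.mul_assoc, hPP, smul_mul, Matrix.one_mul]
  have hU : Uᵀ = U := by
    refine smul_right_injective _ hr ?_
    simp only [← transpose_smul, hcompress, transpose_mul, transpose_transpose, hUC.eq,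
      Matrix.mul_assoc]
  simpa [transpose_mul, hUC.eq, hU] using congrArg transpose hUCP

lemma smul_sub_compression_eq (hr : r ≠ 0) (hPP : Pᵀ * P = r • 1)
    (hUCP : UC * P = P * U) (hPUC : Pᵀ * UC = U * Pᵀ) (δ2 : ℝ) (M : Matrix m m ℝ) :
    δ2 • U - (r⁻¹ • (Pᵀ * M * P))ᵀ * U * (r⁻¹ • (Pᵀ * M * P)) =
      r⁻¹ • (Pᵀ * (δ2 • UC - Mᵀ * UC * M) * P) +
        r⁻¹ • ((M * P - r⁻¹ • (P * (Pᵀ * (M * P))))ᵀ * UC *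
          (M * P - r⁻¹ • (P * (Pᵀ * (M * P))))) := by
  set X := M * P with hX
  have hPP' : ∀ R : Matrix k k ℝ, Pᵀ * (P * R) = r • R := by
    intro R; rw [← Matrix.mul_assoc, hPP, smul_mul, Matrix.one_mul]
  have hUCP' : ∀ R : Matrix k k ℝ, UC * (P * R) = P * (U * R) := by
    intro R; rw [← Matrix.mul_assoc, hUCP, Matrix.mul_assoc]
  have hPUC' : ∀ R : Matrix m k ℝ, Pᵀ * (UC * R) = U * (Pᵀ * R) := by
    intro R; rw [← Matrix.mul_assoc, hPUC, Matrix.mul_assoc]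
  have hXt : ∀ R : Matrix m k ℝ, Pᵀ * (Mᵀ * R) = Xᵀ * R := by
    intro R; rw [hX, transpose_mul, Matrix.mul_assoc]
  simp only [transpose_smul, transpose_mul, transpose_sub, transpose_transpose, Matrix.mul_sub,
    Matrix.sub_mul, Matrix.mul_smul, Matrix.smul_mul, smul_sub, Matrix.mul_assoc, smul_smul,
    hPP', hUCP', hPUC', ← hX, hXt, hPP, mul_one]
  match_scalars <;> field_simp <;> ring

theorem posSemidef_compression (hr : 0 < r) (hPP : Pᵀ * P = r • 1)
    (hUCP : UC * P = P * U) (hUC : UC.PosSemidef) {δ2 : ℝ} {M : Matrix m m ℝ}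
    (hM : (δ2 • UC - Mᵀ * UC * M).PosSemidef) :
    (δ2 • U - (r⁻¹ • (Pᵀ * M * P))ᵀ * U * (r⁻¹ • (Pᵀ * M * P))).PosSemidef := by
  have hPUC := transpose_mul_eq_mul_transpose_of_mul_eq_mul hr.ne' hPP
    (isHermitian_iff_isSymm.mp hUC.isHermitian) hUCP
  rw [smul_sub_compression_eq hr.ne' hPP hUCP hPUC]
  refine .add (.smul ?_ (inv_nonneg.mpr hr.le)) (.smul ?_ (inv_nonneg.mpr hr.le))
  · simpa only [conjTranspose_eq_transpose_of_trivial] using hM.conjTranspose_mul_mul_same P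
  · simpa only [conjTranspose_eq_transpose_of_trivial] using hUC.conjTranspose_mul_mul_same _

theorem posSemidef_projected_error [DecidableEq m] (hr : 0 < r) (hPP : Pᵀ * P = r • 1)
    {LC : Matrix m m ℝ} {LW : Matrix k k ℝ} (hL : LC * P = P * LW) (hLt : LCᵀ * P = P * LWᵀ)
    (hLC : (rsym LC).PosSemidef) {δ2 : ℝ} {B : Matrix m m ℝ}
    (hB : (δ2 • rsym LC - (1 - B * LC)ᵀ * rsym LC * (1 - B * LC)).PosSemidef) :
    (δ2 • rsym LW - (1 - ((1 / r) • (Pᵀ * B * P)) * LW)ᵀ * rsym LW *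
      (1 - ((1 / r) • (Pᵀ * B * P)) * LW)).PosSemidef := by
  have hproj : 1 - ((1 / r) • (Pᵀ * B * P)) * LW = r⁻¹ • (Pᵀ * (1 - B * LC) * P) := by
    have hBL : Pᵀ * (B * LC) * P = Pᵀ * B * P * LW := by simp only [Matrix.mul_assoc, hL]
    rw [Matrix.mul_sub, Matrix.sub_mul, Matrix.mul_one, hPP, hBL, smul_sub, smul_smul,
      inv_mul_cancel₀ hr.ne', one_smul, one_div, Matrix.smul_mul]
  rw [hproj]
  exact posSemidef_compression hr hPP (rsym_mul_eq_mul_rsym P hL hLt) hLC hB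

end Compression

section CycleLift

variable {l n : ℕ}

lemma onesLift_transpose_mul_onesLift : (onesLift l n)ᵀ * onesLift l n = (l : ℝ) • 1 := by
  ext a b
  by_cases h : a = b <;> simp [mul_apply, onesLift, Fintype.sum_prod_type, one_apply, h, eq_comm]

variable [NeZero l]

lemma cycleR_apply (i j : Fin l) : cycleR l i j = if j = i - 1 then 1 else 0 := by
  have hsucc : ((j : ℕ) + 1) % l = ((j + 1 : Fin l) : ℕ) := by
    rw [Fin.val_add, Fin.val_one', Nat.add_mod_mod]
  simp only [cycleR, of_apply, hsucc, Fin.val_inj, eq_sub_iff_add_eq, eq_comm]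

variable (W : Matrix (Fin n) (Fin n) ℝ)

lemma kronecker_cycleR_mulVec (v : Fin l × Fin n → ℝ) (i : Fin l) (a : Fin n) :
    ((cycleR l ⊗ₖ W) *ᵥ v) (i, a) = (W *ᵥ fun b => v (i - 1, b)) a := by
  simp [mulVec, dotProduct, cycleR_apply, Fintype.sum_prod_type, ite_mul]

lemma dotProduct_kronecker_cycleR_mulVec_le (hW : ∀ u, W *ᵥ u ⬝ᵥ W *ᵥ u ≤ u ⬝ᵥ u)
    (v : Fin l × Fin n → ℝ) :
    (cycleR l ⊗ₖ W) *ᵥ v ⬝ᵥ (cycleR l ⊗ₖ W) *ᵥ v ≤ v ⬝ᵥ v := by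
  simp only [dotProduct, Fintype.sum_prod_type, kronecker_cycleR_mulVec]
  calc ∑ i, ∑ a, (W *ᵥ fun b => v (i - 1, b)) a * (W *ᵥ fun b => v (i - 1, b)) a
      ≤ ∑ i, ∑ a, v (i - 1, a) * v (i - 1, a) := Finset.sum_le_sum fun i _ => hW _
    _ = ∑ i, ∑ a, v (i, a) * v (i, a) :=
      Equiv.sum_comp (Equiv.subRight 1) fun i => ∑ a, v (i, a) * v (i, a)

lemma kronecker_cycleR_mul_onesLift : (cycleR l ⊗ₖ W) * onesLift l n = onesLift l n * W := by
  ext ⟨i, a⟩ b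
  simp [mul_apply, onesLift, cycleR_apply, Fintype.sum_prod_type, ite_mul]

lemma kronecker_cycleR_transpose_mul_onesLift :
    (cycleR l ⊗ₖ W)ᵀ * onesLift l n = onesLift l n * Wᵀ := by
  ext ⟨j, b⟩ a
  simp [mul_apply, onesLift, cycleR_apply, Fintype.sum_prod_type, ite_mul, eq_sub_iff_add_eq]

end CycleLift

theorem cycle_lift_pseudoinverse_projection_general {n : ℕ} (l : ℕ) (hl : 0 < l) (δ : ℝ)
    (W : Matrix (Fin n) (Fin n) ℝ)
    (hWnorm : ∀ v : Fin n → ℝ,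
      Real.sqrt (∑ i, ((W *ᵥ v) i) ^ 2) ≤ Real.sqrt (∑ i, (v i) ^ 2))
    (BC : Matrix (Fin l × Fin n) (Fin l × Fin n) ℝ)
    (hBC : (δ ^ 2 • rsym (1 - cycleR l ⊗ₖ W) -
        (1 - BC * (1 - cycleR l ⊗ₖ W))ᵀ * rsym (1 - cycleR l ⊗ₖ W) *
          (1 - BC * (1 - cycleR l ⊗ₖ W))).PosSemidef) :
    (δ ^ 2 • rsym (1 - W) -
        (1 - ((1 / (l : ℝ)) • ((onesLift l n)ᵀ * BC * onesLift l n)) * (1 - W))ᵀ *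
          rsym (1 - W) *
          (1 - ((1 / (l : ℝ)) • ((onesLift l n)ᵀ * BC * onesLift l n)) * (1 - W))).PosSemidef := by
  have : NeZero l := ⟨hl.ne'⟩
  have hW : ∀ u, W *ᵥ u ⬝ᵥ W *ᵥ u ≤ u ⬝ᵥ u := fun u => by
    simpa only [dotProduct, ← sq,
      Real.sqrt_le_sqrt_iff (Finset.sum_nonneg fun i _ => sq_nonneg (u i))] using hWnorm u
  have hL : (1 - cycleR l ⊗ₖ W) * onesLift l n = onesLift l n * (1 - W) := by
    simp only [Matrix.sub_mul, Matrix.mul_sub, Matrix.one_mul, Matrix.mul_one,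
      kronecker_cycleR_mul_onesLift]
  have hLt : (1 - cycleR l ⊗ₖ W)ᵀ * onesLift l n = onesLift l n * (1 - W)ᵀ := by
    simp only [transpose_sub, transpose_one, Matrix.sub_mul, Matrix.mul_sub, Matrix.one_mul,
      Matrix.mul_one, kronecker_cycleR_transpose_mul_onesLift]
  exact posSemidef_projected_error (Nat.cast_pos.mpr hl) onesLift_transpose_mul_onesLift hL hLt
    (posSemidef_rsym_one_sub_of_contraction (dotProduct_kronecker_cycleR_mulVec_le W hW)) hBC

/-- Projecting an approximate pseudoinverse of the cycle-lifted
Laplacian `L_C = I − C_l ⊗ W` yields an approximate pseudoinverse of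
`L_W = I − W`: if `(I − B_C L_C)ᵀ U_{L_C} (I − B_C L_C) ⪯ δ² U_{L_C}`, then
`B_W = (1/l)(1_l ⊗ I_n)ᵀ B_C (1_l ⊗ I_n)` satisfies
`(I − B_W L_W)ᵀ U_{L_W} (I − B_W L_W) ⪯ δ² U_{L_W}`. -/
theorem cycle_lift_pseudoinverse_projection {n : ℕ} (l : ℕ) (hl : 0 < l) (δ : ℝ)
    (W : Matrix (Fin n) (Fin n) ℝ) (hWnn : ∀ i j, 0 ≤ W i j)
    (hWnorm : ∀ v : Fin n → ℝ,
      Real.sqrt (∑ i, ((W *ᵥ v) i) ^ 2) ≤ Real.sqrt (∑ i, (v i) ^ 2))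
    (BC : Matrix (Fin l × Fin n) (Fin l × Fin n) ℝ)
    (hBC : (δ ^ 2 • rsym (1 - cycleR l ⊗ₖ W) -
        (1 - BC * (1 - cycleR l ⊗ₖ W))ᵀ * rsym (1 - cycleR l ⊗ₖ W) *
          (1 - BC * (1 - cycleR l ⊗ₖ W))).PosSemidef) :
    (δ ^ 2 • rsym (1 - W) -
        (1 - ((1 / (l : ℝ)) • ((onesLift l n)ᵀ * BC * onesLift l n)) * (1 - W))ᵀ *
          rsym (1 - W) *
          (1 - ((1 / (l : ℝ)) • ((onesLift l n)ᵀ * BC * onesLift l n)) * (1 - W))).PosSemidef :=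
  cycle_lift_pseudoinverse_projection_general l hl δ W hWnorm BC hBC

end
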